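/- Let d ≥ 1 and let a = (a_1, …, a_d) be a probability vector with a_1 ≥ … ≥ a_d > 0, and let k ∈ {1, …, d} be such that a_1 = a_k and (if k < d) a_k > a_{k+1}. Then for every real R with 0 ≤ R ≤ log k, the minimum of D(b‖a) over all probability vectors b on {1, …, d} with H(b) = R equals −log a_1 − R. -/

import Mathlib

open Finset

/-- Shannon entropy of a vector on `Fin d` (natural logarithm, `0 * log 0 = 0`). -/
noncomputable def shannonEntropy {d : ℕ} (b : Fin d → ℝ) : ℝ :=
  -∑ i, b i * Real.log (b i)

/-- Relative entropy `D(b‖a)` (natural logarithm). -/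
noncomputable def relativeEntropy {d : ℕ} (b a : Fin d → ℝ) : ℝ :=
  ∑ i, b i * (Real.log (b i) - Real.log (a i))

lemma sum_if_helper {d : ℕ} (k : ℕ) (hk1 : 1 ≤ k) (hkd : k ≤ d) (A B : ℝ) :
    ∑ i : Fin d, (if (i : ℕ) = 0 then A else if (i : ℕ) < k then B else 0)
      = A + ((k : ℝ) - 1) * B := by
  rw [Fin.sum_univ_eq_sum_range (fun n => if n = 0 then A else if n < k then B else 0)]
  rw [← Finset.sum_subset (Finset.range_subset_range.mpr hkd)
      (by intro x hx hxk
          simp only [Finset.mem_range] at hx hxk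
          have h1 : x ≠ 0 := by omega
          have h2 : ¬ x < k := by omega
          simp [h1, h2])]
  have hcong : ∀ n ∈ Finset.range k,
      (if n = 0 then A else if n < k then B else 0)
        = (if n = 0 then A - B else 0) + B := by
    intro n hn
    rw [Finset.mem_range] at hn
    by_cases h : n = 0
    · simp [h]
    · simp [h, hn]
  rw [Finset.sum_congr rfl hcong, Finset.sum_add_distrib,
      Finset.sum_ite_eq' (Finset.range k) 0 (fun _ => A - B), Finset.sum_const]
  have : (0 : ℕ) ∈ Finset.range k := Finset.mem_range.mpr (by omega)
  simp [this, Finset.card_range]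
  ring

theorem stmt_2 {d : ℕ} (hd : 1 ≤ d) (a : Fin d → ℝ)
    (ha_pos : ∀ i, 0 < a i)
    (ha_anti : ∀ i j : Fin d, i ≤ j → a j ≤ a i)
    (ha_sum : ∑ i, a i = 1)
    (k : ℕ) (hk1 : 1 ≤ k) (hkd : k ≤ d)
    (hak : a ⟨0, by omega⟩ = a ⟨k - 1, by omega⟩)
    (hlt : ∀ h : k < d, a ⟨k, h⟩ < a ⟨k - 1, by omega⟩)
    (R : ℝ) (hR0 : 0 ≤ R) (hRk : R ≤ Real.log k) :
    IsLeast {x : ℝ | ∃ b : Fin d → ℝ, (∀ i, 0 ≤ b i) ∧ (∑ i, b i = 1) ∧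
        shannonEntropy b = R ∧ x = relativeEntropy b a}
      (-Real.log (a ⟨0, by omega⟩) - R) := by
  have hk0 : (0 : ℝ) < (k : ℝ) := by exact_mod_cast hk1
  have hkne : (k : ℝ) ≠ 0 := ne_of_gt hk0
  set a0 : ℝ := a ⟨0, by omega⟩ with ha0def
  have ha0pos : 0 < a0 := ha_pos _
  -- a i = a0 for i < k
  have haeq : ∀ i : Fin d, (i : ℕ) < k → a i = a0 := by
    intro i hi
    have h1 : a i ≤ a0 := ha_anti ⟨0, by omega⟩ i (by
      show (0 : ℕ) ≤ (i : ℕ); omega)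
    have h2 : a ⟨k - 1, by omega⟩ ≤ a i := ha_anti i ⟨k - 1, by omega⟩ (by
      show (i : ℕ) ≤ k - 1; omega)
    rw [← hak] at h2
    linarith
  constructor
  · -- membership: construct b
    -- the entropy function along the path
    set f : ℝ → ℝ := fun t =>
      -((t + (1 - t) / k) * Real.log (t + (1 - t) / k))
        - ((k : ℝ) - 1) * (((1 - t) / k) * Real.log ((1 - t) / k)) with hf
    have hfc : Continuous f := by
      have h1 : Continuous fun t : ℝ => t + (1 - t) / k := by continuity
      have h2 : Continuous fun t : ℝ => (1 - t) / k := by continuity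
      exact ((Real.continuous_mul_log.comp h1).neg).sub
        (continuous_const.mul (Real.continuous_mul_log.comp h2))
    have hf1 : f 1 = 0 := by simp [hf]
    have hf0 : f 0 = Real.log k := by
      have hlog : Real.log ((1 : ℝ) / k) = -Real.log k := by
        rw [one_div, Real.log_inv]
      simp only [hf, zero_add, sub_zero]
      rw [hlog]
      field_simp
      ring
    have hsub := intermediate_value_Icc' (by norm_num : (0:ℝ) ≤ 1) hfc.continuousOn
    have hRmem : R ∈ Set.Icc (f 1) (f 0) := by
      rw [hf1, hf0]; exact ⟨hR0, hRk⟩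
    obtain ⟨t, ht, htR⟩ := hsub hRmem
    obtain ⟨ht0, ht1⟩ := ht
    set c : ℝ := (1 - t) / k with hc
    have hcnn : 0 ≤ c := div_nonneg (by linarith) (le_of_lt hk0)
    set b : Fin d → ℝ := fun i =>
      if (i : ℕ) = 0 then t + c else if (i : ℕ) < k then c else 0 with hb
    refine ⟨b, ?_, ?_, ?_, ?_⟩
    · intro i
      simp only [hb]
      split_ifs
      · linarith
      · exact hcnn
      · exact le_refl 0
    · rw [hb, sum_if_helper k hk1 hkd]
      field_simp [hc]
      rw [hc]; field_simp; ring
    · -- entropy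
      have : ∑ i, b i * Real.log (b i)
          = ∑ i : Fin d, (if (i : ℕ) = 0 then (t + c) * Real.log (t + c)
              else if (i : ℕ) < k then c * Real.log c else 0) := by
        refine Finset.sum_congr rfl (fun i _ => ?_)
        simp only [hb]
        split_ifs <;> simp
      rw [shannonEntropy, this, sum_if_helper k hk1 hkd]
      have : f t = R := htR
      simp only [hf, ← hc] at this
      linarith
    · -- relative entropy
      have hsplit : relativeEntropy b a
          = (∑ i, b i * Real.log (b i)) - ∑ i, b i * Real.log (a i) := by
        rw [relativeEntropy, ← Finset.sum_sub_distrib]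
        refine Finset.sum_congr rfl (fun i _ => by ring)
      have hbent : ∑ i, b i * Real.log (b i) = -R := by
        have h := htR
        have : ∑ i, b i * Real.log (b i)
            = ∑ i : Fin d, (if (i : ℕ) = 0 then (t + c) * Real.log (t + c)
                else if (i : ℕ) < k then c * Real.log c else 0) := by
          refine Finset.sum_congr rfl (fun i _ => ?_)
          simp only [hb]
          split_ifs <;> simp
        rw [this, sum_if_helper k hk1 hkd]
        simp only [hf, ← hc] at h
        linarith
      have hba : ∑ i, b i * Real.log (a i) = Real.log a0 := by
        have : ∀ i : Fin d, b i * Real.log (a i) = b i * Real.log a0 := by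
          intro i
          by_cases hik : (i : ℕ) < k
          · rw [haeq i hik]
          · have : b i = 0 := by
              simp only [hb]
              have h1 : (i : ℕ) ≠ 0 := by omega
              simp [h1, hik]
            rw [this]; ring
        rw [Finset.sum_congr rfl (fun i _ => this i), ← Finset.sum_mul]
        have hbs : ∑ i, b i = 1 := by
          rw [hb, sum_if_helper k hk1 hkd]
          field_simp [hc]
          rw [hc]; field_simp; ring
        rw [hbs, one_mul]
      rw [hsplit, hbent, hba]
      ring
  · -- lower bound
    rintro x ⟨b, hbnn, hbsum, hbent, rfl⟩
    have hsplit : relativeEntropy b a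
        = (∑ i, b i * Real.log (b i)) - ∑ i, b i * Real.log (a i) := by
      rw [relativeEntropy, ← Finset.sum_sub_distrib]
      refine Finset.sum_congr rfl (fun i _ => by ring)
    have hent : ∑ i, b i * Real.log (b i) = -R := by
      have := hbent
      rw [shannonEntropy] at this
      linarith
    have hle : ∑ i, b i * Real.log (a i) ≤ Real.log a0 := by
      calc ∑ i, b i * Real.log (a i) ≤ ∑ i, b i * Real.log a0 := by
            refine Finset.sum_le_sum (fun i _ => ?_)
            refine mul_le_mul_of_nonneg_left ?_ (hbnn i)
            exact Real.log_le_log (ha_pos i) (ha_anti ⟨0, by omega⟩ i (by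
              show (0 : ℕ) ≤ (i : ℕ); omega))
        _ = Real.log a0 := by rw [← Finset.sum_mul, hbsum, one_mul]
    rw [hsplit, hent]
    linarith
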